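/- arXiv:2107.13309 — 4 statements merged into one kernel-verified Lean document; each statement's English description precedes it below -/
import Mathlib

section
/- Let H be a family of pairwise independent hash functions h : U → [2^λ] (i.e., for h chosen uniformly from H, any two distinct inputs are mapped independently and uniformly). Let S ⊆ U with |S| = s ≥ 1, and assume λ ≥ ⌈log₂ s⌉ + 1. Set t = λ − ⌈log₂ s⌉ − 1. Then for a fixed element d ∈ S, the probability (over uniform h ∈ H) that h(d) ∈ [2^t] and h(d') ∉ [2^t] for all d' ∈ S \ {d} is at least 1/(8s). -/
/-!
With `p = 2^t / 2^λ`, uniformity gives `Pr[h d ∈ [2^t]] = p` and pairwise independence gives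
`Pr[h d ∈ [2^t] ∧ h d' ∈ [2^t]] = p²` for each `d' ≠ d`. A union bound over `S \ {d}` leaves
probability at least `p - (s - 1) p²`, and the choice of `t` puts `p` in `[1/(4s), 1/(2s)]`,
where `p - s p² ≥ p / 2 ≥ 1/(8s)`.
-/

open Finset

theorem Nat.pow_clog_lt_mul_self {b x : ℕ} (hb : 1 < b) (hx : 1 ≤ x) :
    b ^ Nat.clog b x < b * x := by
  rcases hx.eq_or_lt with rfl | hx
  · simpa using hb
  · have hpos := Nat.clog_pos hb hx
    calc b ^ Nat.clog b x = b * b ^ (Nat.clog b x).pred := by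
          rw [← pow_succ', Nat.succ_pred_eq_of_pos hpos]
      _ < b * x := Nat.mul_lt_mul_of_pos_left (Nat.pow_pred_clog_lt_self hb hx) (by omega)

theorem two_pow_sub_clog_div_two_pow_mem_Icc {s lam : ℕ} (hs : 1 ≤ s)
    (hlam : Nat.clog 2 s + 1 ≤ lam) :
    (2 : ℝ) ^ (lam - (Nat.clog 2 s + 1)) / 2 ^ lam ∈ Set.Icc (1 / (4 * s : ℝ)) (1 / (2 * s)) := by
  have hsplit : (2 : ℝ) ^ lam = 2 ^ (lam - (Nat.clog 2 s + 1)) * (2 * 2 ^ Nat.clog 2 s) := by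
    rw [← pow_succ', ← pow_add, Nat.sub_add_cancel hlam]
  have hle : (s : ℝ) ≤ 2 ^ Nat.clog 2 s := by exact_mod_cast Nat.le_pow_clog one_lt_two s
  have hlt : (2 : ℝ) ^ Nat.clog 2 s < 2 * s := by
    exact_mod_cast Nat.pow_clog_lt_mul_self one_lt_two hs
  have hs0 : (0 : ℝ) < s := by exact_mod_cast hs
  rw [hsplit, div_mul_cancel_left₀ (by positivity), ← one_div]
  exact ⟨one_div_le_one_div_of_le (by positivity) (by linarith),
    one_div_le_one_div_of_le (by positivity) (by linarith)⟩

theorem card_filter_mem_eq_div_mul {H α : Type*} [Fintype H] [DecidableEq α] (g : H → α)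
    (Z : Finset α) {m N : ℕ} (hfiber : ∀ z ∈ Z, #{x | g x = z} * m = N) (hm : m ≠ 0) :
    (#{x | g x ∈ Z} : ℝ) = #Z / m * N := by
  have hsum : #{x | g x ∈ Z} = ∑ z ∈ Z, #{x | g x = z} := by
    rw [card_eq_sum_card_fiberwise (s := {x | g x ∈ Z}) fun x hx => (mem_filter.1 hx).2]
    refine sum_congr rfl fun z hz => ?_
    rw [filter_filter]
    exact congrArg card <| filter_congr fun x _ => ⟨And.right, fun h => ⟨h ▸ hz, h⟩⟩
  have hfiberR : ∀ z ∈ Z, (#{x | g x = z} : ℝ) = N / m := fun z hz => by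
    rw [eq_div_iff (by exact_mod_cast hm)]; exact_mod_cast hfiber z hz
  rw [hsum, Nat.cast_sum, sum_congr rfl hfiberR, sum_const, nsmul_eq_mul]
  ring

theorem card_filter_le_card_filter_forall_not_add_sum {H ι : Type*} [Fintype H]
    (p : H → Prop) [DecidablePred p] (q : ι → H → Prop) [∀ i, DecidablePred (q i)]
    (I : Finset ι) :
    #{x | p x} ≤ #{x | p x ∧ ∀ i ∈ I, ¬ q i x} + ∑ i ∈ I, #{x | p x ∧ q i x} := by
  classical
  calc #{x | p x}
      ≤ #(({x | p x ∧ ∀ i ∈ I, ¬ q i x} : Finset H) ∪ I.biUnion fun i => {x | p x ∧ q i x}) := by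
        refine card_le_card fun x hx => ?_
        simp only [mem_union, mem_filter, mem_univ, true_and, mem_biUnion] at hx ⊢
        by_cases hq : ∀ i ∈ I, ¬ q i x
        · exact .inl ⟨hx, hq⟩
        · push Not at hq
          obtain ⟨i, hi, hqi⟩ := hq
          exact .inr ⟨i, hi, hx, hqi⟩
    _ ≤ _ := (card_union_le _ _).trans (Nat.add_le_add_left card_biUnion_le _)

theorem sub_card_mul_sq_le_card_filter_div {H ι : Type*} [Fintype H] [Nonempty H]
    (p : H → Prop) [DecidablePred p] (q : ι → H → Prop) [∀ i, DecidablePred (q i)]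
    (I : Finset ι) {r : ℝ} (hp : (#{x | p x} : ℝ) = r * Fintype.card H)
    (hpq : ∀ i ∈ I, (#{x | p x ∧ q i x} : ℝ) = r ^ 2 * Fintype.card H) :
    r - #I * r ^ 2 ≤ #{x | p x ∧ ∀ i ∈ I, ¬ q i x} / Fintype.card H := by
  have hN : (0 : ℝ) < Fintype.card H := by exact_mod_cast Fintype.card_pos
  have hunion := (Nat.cast_le (α := ℝ)).2 (card_filter_le_card_filter_forall_not_add_sum p q I)
  rw [Nat.cast_add, Nat.cast_sum, sum_congr rfl hpq, sum_const, nsmul_eq_mul, hp] at hunion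
  rw [le_div_iff₀ hN]
  linarith

theorem one_div_eight_mul_le_sub_mul_sq {s p : ℝ} (hs : 0 < s)
    (hp : p ∈ Set.Icc (1 / (4 * s)) (1 / (2 * s))) :
    1 / (8 * s) ≤ p - (s - 1) * p ^ 2 := by
  obtain ⟨hlow, hup⟩ := hp
  have hsp : s * p ≤ 1 / 2 := by
    rw [le_div_iff₀ (by positivity)] at hup; linarith
  have hp0 : 0 < p := lt_of_lt_of_le (by positivity) hlow
  calc 1 / (8 * s) = 1 / (4 * s) / 2 := by ring
    _ ≤ p / 2 := by gcongr
    _ ≤ p * (1 - s * p) := by nlinarith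
    _ ≤ p - (s - 1) * p ^ 2 := by nlinarith

theorem stmt3_general {U H : Type*} [Fintype H] [Nonempty H] [DecidableEq U]
    (lam : ℕ) (f : H → U → ℕ) (s : ℕ) (S : Finset U)
    (hcard : S.card = s)
    (hlam : Nat.clog 2 s + 1 ≤ lam)
    (huniform : ∀ x : U, ∀ z ∈ Finset.Icc 1 (2 ^ lam),
      (Finset.univ.filter fun h : H => f h x = z).card * 2 ^ lam = Fintype.card H)
    (hpair : ∀ x₁ x₂ : U, x₁ ≠ x₂ → ∀ z₁ ∈ Finset.Icc 1 (2 ^ lam), ∀ z₂ ∈ Finset.Icc 1 (2 ^ lam),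
      (Finset.univ.filter fun h : H => f h x₁ = z₁ ∧ f h x₂ = z₂).card * (2 ^ lam) ^ 2
        = Fintype.card H)
    (d : U) (hd : d ∈ S) :
    (1 : ℝ) / (8 * s) ≤
      ((Finset.univ.filter fun h : H =>
          f h d ∈ Finset.Icc 1 (2 ^ (lam - (Nat.clog 2 s + 1))) ∧
          ∀ d' ∈ S.erase d, f h d' ∉ Finset.Icc 1 (2 ^ (lam - (Nat.clog 2 s + 1)))).card : ℝ)
        / (Fintype.card H : ℝ) := by
  set T := 2 ^ (lam - (Nat.clog 2 s + 1))
  set p : ℝ := T / 2 ^ lam with hp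
  have hs : 1 ≤ s := hcard ▸ card_pos.2 ⟨d, hd⟩
  have hTM : Icc 1 T ⊆ Icc 1 (2 ^ lam) :=
    Icc_subset_Icc_right (Nat.pow_le_pow_right two_pos (Nat.sub_le _ _))
  have hA : (#{h | f h d ∈ Icc 1 T} : ℝ) = p * Fintype.card H := by
    rw [card_filter_mem_eq_div_mul (f · d) _ (fun z hz => huniform d z (hTM hz)) (by positivity),
      Nat.card_Icc, Nat.add_sub_cancel]
    simp only [hp, Nat.cast_pow, Nat.cast_ofNat]
  have hB : ∀ d' ∈ S.erase d,
      (#{h | f h d ∈ Icc 1 T ∧ f h d' ∈ Icc 1 T} : ℝ) = p ^ 2 * Fintype.card H := by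
    intro d' hd'
    have := card_filter_mem_eq_div_mul (fun h => (f h d, f h d')) (Icc 1 T ×ˢ Icc 1 T)
      (fun z hz => by
        simpa only [Prod.ext_iff] using hpair d d' (ne_of_mem_erase hd').symm
          z.1 (hTM (mem_product.1 hz).1) z.2 (hTM (mem_product.1 hz).2)) (by positivity)
    simpa only [mem_product, card_product, Nat.card_Icc, Nat.add_sub_cancel, hp, div_pow,
      Nat.cast_mul, Nat.cast_pow, Nat.cast_ofNat, sq, div_mul_div_comm] using this
  calc 1 / (8 * s : ℝ) ≤ p - (s - 1) * p ^ 2 :=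
        one_div_eight_mul_le_sub_mul_sq (by positivity) <| by
          simpa only [hp, T, Nat.cast_pow, Nat.cast_ofNat] using
            two_pow_sub_clog_div_two_pow_mem_Icc hs hlam
    _ = p - #(S.erase d) * p ^ 2 := by
        rw [card_erase_of_mem hd, hcard, Nat.cast_sub hs, Nat.cast_one]
    _ ≤ _ := sub_card_mul_sq_le_card_filter_div _ _ _ hA hB

/-- For a pairwise independent family of hash functions `h : U → [2^lam]`, a set
`S ⊆ U` of size `s ≥ 1`, `lam ≥ ⌈log₂ s⌉ + 1` and `t = lam − ⌈log₂ s⌉ − 1`, the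
probability (over a uniform member of the family) that a fixed `d ∈ S` hashes into
`[2^t]` while no other element of `S` does is at least `1/(8s)`. -/
theorem stmt3 {U H : Type*} [Fintype H] [Nonempty H] [DecidableEq U]
    (lam : ℕ) (f : H → U → ℕ) (s : ℕ) (S : Finset U)
    (hcard : S.card = s) (hs : 1 ≤ s)
    (hlam : Nat.clog 2 s + 1 ≤ lam)
    (hrange : ∀ h x, f h x ∈ Finset.Icc 1 (2 ^ lam))
    (huniform : ∀ x : U, ∀ z ∈ Finset.Icc 1 (2 ^ lam),
      (Finset.univ.filter fun h : H => f h x = z).card * 2 ^ lam = Fintype.card H)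
    (hpair : ∀ x₁ x₂ : U, x₁ ≠ x₂ → ∀ z₁ ∈ Finset.Icc 1 (2 ^ lam), ∀ z₂ ∈ Finset.Icc 1 (2 ^ lam),
      (Finset.univ.filter fun h : H => f h x₁ = z₁ ∧ f h x₂ = z₂).card * (2 ^ lam) ^ 2
        = Fintype.card H)
    (d : U) (hd : d ∈ S) :
    (1 : ℝ) / (8 * s) ≤
      ((Finset.univ.filter fun h : H =>
          f h d ∈ Finset.Icc 1 (2 ^ (lam - (Nat.clog 2 s + 1))) ∧
          ∀ d' ∈ S.erase d, f h d' ∉ Finset.Icc 1 (2 ^ (lam - (Nat.clog 2 s + 1)))).card : ℝ)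
        / (Fintype.card H : ℝ) :=
  stmt3_general lam f s S hcard hlam huniform hpair d hd
end

section
/- Let H be a family of pairwise independent hash functions h : U → [2^λ], let S ⊆ U with |S| = s ≥ 1, and λ ≥ ⌈log₂ s⌉ + 1, and set t = λ − ⌈log₂ s⌉ − 1. Then the probability (over uniform h ∈ H) that exactly one element of S is hashed into the set [2^t] is at least 1/8. -/
/-!
Let `T = [1, 2^t]` and `p = 2^t / 2^λ = 2^{-(⌈log₂ s⌉ + 1)}`, so that `1/4 < s p ≤ 1/2`.
By uniformity each `d ∈ S` lands in `T` with probability `p`, and by pairwise independence two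
distinct elements both land there with probability `p²`. If `k` elements of `S` land in `T`, then
`k ≤ [k = 1] + k (k - 1)`; averaging over the family gives the Bonferroni-type bound
`P(exactly one) ≥ s p - s (s - 1) p² ≥ s p (1 - s p) ≥ 3/16`.
-/

open Finset

section Counting

variable {Ω ι α : Type*} [Fintype Ω]

theorem card_filter_mem_mul_of_card_fiber_mul [DecidableEq α] (g : Ω → α) (T : Finset α)
    {M N : ℕ} (hfiber : ∀ z ∈ T, #{ω | g ω = z} * M = N) : #{ω | g ω ∈ T} * M = #T * N := by
  rw [← sum_card_fiberwise_eq_card_filter, sum_mul, sum_congr rfl hfiber, sum_const, smul_eq_mul]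

theorem card_filter_mem_and_mem_mul_of_card_fiber_mul [DecidableEq α] (g₁ g₂ : Ω → α)
    (T : Finset α) {M N : ℕ}
    (hfiber : ∀ z₁ ∈ T, ∀ z₂ ∈ T, #{ω | g₁ ω = z₁ ∧ g₂ ω = z₂} * M = N) :
    #{ω | g₁ ω ∈ T ∧ g₂ ω ∈ T} * M = #T ^ 2 * N := by
  have hfiber' : ∀ z ∈ T ×ˢ T, #{ω | (g₁ ω, g₂ ω) = z} * M = N := by
    rintro ⟨z₁, z₂⟩ hz
    simpa only [Prod.mk.injEq] using hfiber z₁ (mem_product.mp hz).1 z₂ (mem_product.mp hz).2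
  simpa [sq] using card_filter_mem_mul_of_card_fiber_mul (fun ω => (g₁ ω, g₂ ω)) _ hfiber'

theorem card_le_ite_card_eq_one_add_card_offDiag [DecidableEq ι] (A : Finset ι) :
    #A ≤ (if #A = 1 then 1 else 0) + #A.offDiag := by
  rw [offDiag_card]
  split_ifs with h
  · omega
  · rcases Nat.lt_or_ge #A 2 with h2 | h2
    · omega
    · have : 2 * #A ≤ #A * #A := Nat.mul_le_mul_right _ h2
      omega

theorem sum_card_le_card_filter_card_eq_one_add_sum_offDiag [DecidableEq ι] (S : Finset ι)
    (P : Ω → ι → Prop) [∀ ω i, Decidable (P ω i)] :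
    ∑ i ∈ S, #{ω | P ω i} ≤
      #{ω | #{i ∈ S | P ω i} = 1} + ∑ ij ∈ S.offDiag, #{ω | P ω ij.1 ∧ P ω ij.2} := by
  have hsingles : ∑ i ∈ S, #{ω | P ω i} = ∑ ω, #{i ∈ S | P ω i} :=
    (sum_card_bipartiteAbove_eq_sum_card_bipartiteBelow (s := univ) (t := S) P).symm
  have hpairs :
      ∑ ij ∈ S.offDiag, #{ω | P ω ij.1 ∧ P ω ij.2} = ∑ ω, #{i ∈ S | P ω i}.offDiag := by
    refine (sum_card_bipartiteAbove_eq_sum_card_bipartiteBelow (s := univ) (t := S.offDiag)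
      (fun ω ij => P ω ij.1 ∧ P ω ij.2)).symm.trans (sum_congr rfl fun ω _ => congrArg card ?_)
    ext ij
    simp only [mem_bipartiteAbove, mem_offDiag, mem_filter]
    tauto
  rw [hsingles, hpairs, card_filter, ← sum_add_distrib]
  exact sum_le_sum fun ω _ => card_le_ite_card_eq_one_add_card_offDiag _

end Counting

theorem Nat.pow_clog_lt_mul {b n : ℕ} (hb : 1 < b) (hn : 1 ≤ n) : b ^ Nat.clog b n < b * n := by
  rcases hn.eq_or_lt with rfl | hn
  · simpa using hb
  · have hlt := Nat.pow_pred_clog_lt_self hb hn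
    rw [← Nat.succ_pred_eq_of_pos (Nat.clog_pos hb hn), pow_succ']
    exact Nat.mul_lt_mul_of_pos_left hlt (by omega)

theorem le_eight_mul_of_mul_le {s q M N E : ℕ} (hlow : 2 * s * q ≤ M) (hhigh : M < 4 * s * q)
    (h : s * (q * N * M) ≤ E * M ^ 2 + s * (s - 1) * (q ^ 2 * N)) : N ≤ 8 * E := by
  have hs : 1 ≤ s := Nat.pos_of_ne_zero (by rintro rfl; simp at hhigh)
  zify [hs] at h hlow hhigh
  have hquad : (M : ℤ) ^ 2 ≤ 8 * s * q * (M - (s - 1) * q) := by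
    nlinarith [mul_nonneg (sub_nonneg.mpr hlow) (sub_nonneg.mpr hhigh.le)]
  have hM : (0 : ℤ) < M ^ 2 := by
    have : (0 : ℤ) < M := by nlinarith
    positivity
  have : (N : ℤ) * M ^ 2 ≤ 8 * E * M ^ 2 :=
    calc (N : ℤ) * M ^ 2 ≤ N * (8 * s * q * (M - (s - 1) * q)) := by gcongr
      _ = 8 * (s * (q * N * M) - s * (s - 1) * (q ^ 2 * N)) := by ring
      _ ≤ 8 * E * M ^ 2 := by linarith
  exact_mod_cast le_of_mul_le_mul_right this hM

theorem stmt4_general {U H : Type*} [Fintype H] [Nonempty H]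
    (lam : ℕ) (f : H → U → ℕ) (s : ℕ) (S : Finset U)
    (hcard : S.card = s) (hs : 1 ≤ s)
    (hlam : Nat.clog 2 s + 1 ≤ lam)
    (huniform : ∀ x : U, ∀ z ∈ Finset.Icc 1 (2 ^ lam),
      (Finset.univ.filter fun h : H => f h x = z).card * 2 ^ lam = Fintype.card H)
    (hpair : ∀ x₁ x₂ : U, x₁ ≠ x₂ → ∀ z₁ ∈ Finset.Icc 1 (2 ^ lam), ∀ z₂ ∈ Finset.Icc 1 (2 ^ lam),
      (Finset.univ.filter fun h : H => f h x₁ = z₁ ∧ f h x₂ = z₂).card * (2 ^ lam) ^ 2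
        = Fintype.card H) :
    (1 : ℝ) / 8 ≤
      ((Finset.univ.filter fun h : H =>
          (S.filter fun d => f h d ∈ Finset.Icc 1 (2 ^ (lam - (Nat.clog 2 s + 1)))).card = 1).card : ℝ)
        / (Fintype.card H : ℝ) := by
  classical
  set q := 2 ^ (lam - (Nat.clog 2 s + 1))
  set T := Icc 1 q
  have hM : 2 ^ lam = q * (2 * 2 ^ Nat.clog 2 s) := by
    rw [← pow_succ', ← pow_add, Nat.sub_add_cancel hlam]
  have hT : T ⊆ Icc 1 (2 ^ lam) :=
    Icc_subset_Icc_right (hM ▸ Nat.le_mul_of_pos_right _ (by positivity))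
  have hsingle (d : U) : #{h | f h d ∈ T} * 2 ^ lam = q * Fintype.card H := by
    simpa [T] using
      card_filter_mem_mul_of_card_fiber_mul (f · d) T fun z hz => huniform d z (hT hz)
  have hdouble : ∀ ij ∈ S.offDiag,
      #{h | f h ij.1 ∈ T ∧ f h ij.2 ∈ T} * (2 ^ lam) ^ 2 = q ^ 2 * Fintype.card H := by
    rintro ⟨i, j⟩ hij
    simpa [T] using card_filter_mem_and_mem_mul_of_card_fiber_mul (f · i) (f · j) T
      fun z₁ hz₁ z₂ hz₂ => hpair i j (mem_offDiag.mp hij).2.2 z₁ (hT hz₁) z₂ (hT hz₂)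
  have hcount := Nat.mul_le_mul_right ((2 ^ lam) ^ 2)
    (sum_card_le_card_filter_card_eq_one_add_sum_offDiag S fun h d => f h d ∈ T)
  rw [add_mul, sum_mul, sum_mul, sum_congr rfl hdouble, sum_congr rfl fun d _ => by
    rw [sq, ← mul_assoc, hsingle], sum_const, sum_const, offDiag_card, hcard, smul_eq_mul,
    smul_eq_mul, ← Nat.mul_sub_one] at hcount
  have hlow : 2 * s * q ≤ 2 ^ lam := by
    rw [hM]; nlinarith [Nat.le_pow_clog one_lt_two s]
  have hhigh : 2 ^ lam < 4 * s * q := by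
    have hq : 0 < q := by positivity
    rw [hM]; nlinarith [Nat.pow_clog_lt_mul one_lt_two hs]
  have hN : (0 : ℝ) < Fintype.card H := by exact_mod_cast Fintype.card_pos
  rw [div_le_div_iff₀ (by norm_num) hN, one_mul, mul_comm]
  exact_mod_cast le_eight_mul_of_mul_le hlow hhigh hcount

/-- For a pairwise independent family of hash functions `h : U → [2^lam]`, a set
`S ⊆ U` of size `s ≥ 1`, `lam ≥ ⌈log₂ s⌉ + 1` and `t = lam − ⌈log₂ s⌉ − 1`, the
probability that exactly one element of `S` hashes into `[2^t]` is at least `1/8`. -/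
theorem stmt4 {U H : Type*} [Fintype H] [Nonempty H] [DecidableEq U]
    (lam : ℕ) (f : H → U → ℕ) (s : ℕ) (S : Finset U)
    (hcard : S.card = s) (hs : 1 ≤ s)
    (hlam : Nat.clog 2 s + 1 ≤ lam)
    (hrange : ∀ h x, f h x ∈ Finset.Icc 1 (2 ^ lam))
    (huniform : ∀ x : U, ∀ z ∈ Finset.Icc 1 (2 ^ lam),
      (Finset.univ.filter fun h : H => f h x = z).card * 2 ^ lam = Fintype.card H)
    (hpair : ∀ x₁ x₂ : U, x₁ ≠ x₂ → ∀ z₁ ∈ Finset.Icc 1 (2 ^ lam), ∀ z₂ ∈ Finset.Icc 1 (2 ^ lam),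
      (Finset.univ.filter fun h : H => f h x₁ = z₁ ∧ f h x₂ = z₂).card * (2 ^ lam) ^ 2
        = Fintype.card H) :
    (1 : ℝ) / 8 ≤
      ((Finset.univ.filter fun h : H =>
          (S.filter fun d => f h d ∈ Finset.Icc 1 (2 ^ (lam - (Nat.clog 2 s + 1)))).card = 1).card : ℝ)
        / (Fintype.card H : ℝ) :=
  stmt4_general lam f s S hcard hs hlam huniform hpair
end

section
/- Let G = (V, E, ω) be a weighted undirected graph, S ⊆ V, and 0 < ζ' be a real parameter. Suppose distance estimates d̂ satisfy: d̂(s) = 0 for s ∈ S, and for each vertex v and each round p, d̂ is updated so that if u* is v's neighbor on a shortest (p+1)-bounded path to S with d̂(u*) ≤ (1+ζ')^p d^{(p)}_G(u*, S), then the new estimate d̂(v) is at most (1+ζ') · (d̂(u*) + ω(u*, v)) and is always at least some true bounded distance to S. Then after p rounds, for every vertex v: d^{(p)}_G(v, S) ≤ d̂(v) ≤ (1 + ζ')^p · d^{(p)}_G(v, S). -/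
open scoped ENNReal

/-!
Induction on the number of rounds `p`. A finite `(p+1)`-bounded distance from `v ∉ S` is
attained by a walk (there are finitely many walks of bounded length), whose first edge `v u`
splits it as `d^{(p+1)}(v, S) = ω(u, v) + d^{(p)}(u, S)`. The induction hypothesis at `u`
enables the update rule, and `(1+ζ') (x + ω) ≤ (1+ζ')^{p+1} (d^{(p)}(u, S) + ω)` whenever
`x ≤ (1+ζ')^p d^{(p)}(u, S)`, because `1 ≤ (1+ζ')^p`.
-/

/-- The weight of a walk: the sum of the weights of its edges (darts). -/
def walkWeight {V : Type*} (w : V → V → ℝ) {G : SimpleGraph V} {u v : V}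
    (p : G.Walk u v) : ℝ :=
  (p.darts.map fun d => w d.toProd.1 d.toProd.2).sum

/-- The `t`-bounded distance from `v` to a set `S`. -/
noncomputable def setBddDist {V : Type*} (G : SimpleGraph V) (w : V → V → ℝ)
    (S : Set V) (t : ℕ) (v : V) : ℝ≥0∞ :=
  ⨅ (s : V) (_ : s ∈ S) (p : G.Walk v s) (_ : p.length ≤ t),
    ENNReal.ofReal (walkWeight w p)

section BoundedDistance

variable {V : Type*} {G : SimpleGraph V} {w : V → V → ℝ} {S : Set V} {t : ℕ} {u v : V}

@[simp]
lemma walkWeight_cons {a b c : V} (h : G.Adj a b) (q : G.Walk b c) :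
    walkWeight w (.cons h q) = w a b + walkWeight w q := by
  simp [walkWeight]

lemma walkWeight_nonneg (hw : ∀ a b, G.Adj a b → 0 ≤ w a b) {a b : V} (q : G.Walk a b) :
    0 ≤ walkWeight w q := by
  induction q with
  | nil => simp [walkWeight]
  | cons h q ih => simpa using add_nonneg (hw _ _ h) ih

lemma setBddDist_le_walkWeight {s : V} (hs : s ∈ S) (q : G.Walk v s) (hq : q.length ≤ t) :
    setBddDist G w S t v ≤ ENNReal.ofReal (walkWeight w q) :=
  iInf₂_le_of_le s hs (iInf₂_le q hq)

lemma setBddDist_zero_of_notMem (hv : v ∉ S) : setBddDist G w S 0 v = ⊤ := by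
  simp only [setBddDist, iInf_eq_top]
  rintro s hs (_ | ⟨_, _⟩) hq
  · exact absurd hs hv
  · simp at hq

lemma setBddDist_succ_le (h : G.Adj v u) :
    setBddDist G w S (t + 1) v ≤ ENNReal.ofReal (w v u) + setBddDist G w S t u := by
  simp only [setBddDist, ENNReal.add_iInf]
  refine le_iInf₂ fun s hs => le_iInf₂ fun q hq => ?_
  calc setBddDist G w S (t + 1) v
      ≤ ENNReal.ofReal (walkWeight w (.cons h q)) :=
        setBddDist_le_walkWeight hs _ (by simpa using hq)
    _ ≤ ENNReal.ofReal (w v u) + ENNReal.ofReal (walkWeight w q) := by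
        simpa using ENNReal.ofReal_add_le

lemma exists_walk_eq_setBddDist [Finite V] (h : setBddDist G w S t v ≠ ⊤) :
    ∃ s ∈ S, ∃ q : G.Walk v s, q.length ≤ t ∧
      ENNReal.ofReal (walkWeight w q) = setBddDist G w S t v := by
  classical
  have : Fintype V := Fintype.ofFinite V
  have hfin : setBddDist G w S t v =
      ⨅ x : (Σ s : S, {q : G.Walk v s // q.length < t + 1}),
        ENNReal.ofReal (walkWeight w x.2.1) := by
    simp only [setBddDist, ← Nat.lt_succ_iff, iInf_subtype']
    rw [iInf_sigma']
  rw [hfin] at h ⊢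
  rcases isEmpty_or_nonempty (Σ s : S, {q : G.Walk v s // q.length < t + 1}) with _ | _
  · exact absurd (iInf_of_empty _) h
  obtain ⟨⟨⟨s, hs⟩, q, hq⟩, hmin⟩ := exists_eq_ciInf_of_finite
    (f := fun x : (Σ s : S, {q : G.Walk v s // q.length < t + 1}) =>
      ENNReal.ofReal (walkWeight w x.2.1))
  exact ⟨s, hs, q, Nat.lt_succ_iff.mp hq, hmin⟩

lemma setBddDist_succ_cases [Finite V] (hw : ∀ a b, G.Adj a b → 0 ≤ w a b) :
    setBddDist G w S (t + 1) v = ⊤ ∨ v ∈ S ∨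
      ∃ u, G.Adj v u ∧
        setBddDist G w S (t + 1) v = ENNReal.ofReal (w v u) + setBddDist G w S t u := by
  by_cases htop : setBddDist G w S (t + 1) v = ⊤
  · exact .inl htop
  obtain ⟨s, hs, q, hq, hqw⟩ := exists_walk_eq_setBddDist htop
  cases q with
  | nil => exact .inr (.inl hs)
  | @cons _ u _ h q =>
    refine .inr (.inr ⟨u, h, le_antisymm (setBddDist_succ_le h) ?_⟩)
    rw [← hqw, walkWeight_cons, ENNReal.ofReal_add (hw _ _ h) (walkWeight_nonneg hw q)]
    exact add_le_add_right (setBddDist_le_walkWeight hs q (by simpa using hq)) _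

end BoundedDistance

lemma ENNReal.mul_add_le_pow_succ_mul_add {c x a b : ℝ≥0∞} {p : ℕ} (hc : 1 ≤ c)
    (hx : x ≤ c ^ p * a) : c * (x + b) ≤ c ^ (p + 1) * (a + b) :=
  calc c * (x + b) ≤ c * (c ^ p * a + c ^ p * b) := by
        gcongr
        exact le_mul_of_one_le_left zero_le (one_le_pow₀ hc)
    _ = c ^ (p + 1) * (a + b) := by ring

theorem setBddDist_approx_upper {V : Type*} [Finite V] {G : SimpleGraph V} {w : V → V → ℝ}
    (hsymm : ∀ a b, w a b = w b a) (hw : ∀ a b, G.Adj a b → 0 ≤ w a b) {S : Set V}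
    {c : ℝ≥0∞} (hc : 1 ≤ c) {D : ℕ → V → ℝ≥0∞} (hS : ∀ p, ∀ s ∈ S, D p s = 0)
    (hupd : ∀ p v u, G.Adj u v →
      setBddDist G w S (p + 1) v = setBddDist G w S p u + ENNReal.ofReal (w u v) →
      D p u ≤ c ^ p * setBddDist G w S p u →
      D (p + 1) v ≤ c * (D p u + ENNReal.ofReal (w u v))) :
    ∀ p v, D p v ≤ c ^ p * setBddDist G w S p v := by
  intro p
  induction p with
  | zero =>
    intro v
    by_cases hv : v ∈ S
    · simp [hS 0 v hv]
    · simp [setBddDist_zero_of_notMem hv]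
  | succ p ih =>
    intro v
    rcases setBddDist_succ_cases (S := S) (t := p) (v := v) hw with htop | hv | ⟨u, hvu, heq⟩
    · simp [htop, ENNReal.mul_top (pow_ne_zero _ (one_pos.trans_le hc).ne')]
    · simp [hS _ v hv]
    · rw [hsymm, add_comm (ENNReal.ofReal _)] at heq
      rw [heq]
      exact (hupd p v u hvu.symm heq (ih u)).trans
        (ENNReal.mul_add_le_pow_succ_mul_add hc (ih u))

theorem stmt12_general {V : Type*} [Fintype V] (G : SimpleGraph V)
    (w : V → V → ℝ) (hsymm : ∀ a b, w a b = w b a)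
    (hpos : ∀ a b, G.Adj a b → 0 < w a b) (S : Set V)
    (ζ' : ℝ) (hζ : 0 < ζ')
    (D : ℕ → V → ℝ≥0∞)
    (hS : ∀ p, ∀ s ∈ S, D p s = 0)
    (hlow : ∀ p v, setBddDist G w S p v ≤ D p v)
    (hupd : ∀ p v u, G.Adj u v →
      setBddDist G w S (p + 1) v = setBddDist G w S p u + ENNReal.ofReal (w u v) →
      D p u ≤ ENNReal.ofReal ((1 + ζ') ^ p) * setBddDist G w S p u →
      D (p + 1) v ≤ ENNReal.ofReal (1 + ζ') * (D p u + ENNReal.ofReal (w u v))) :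
    ∀ p v, setBddDist G w S p v ≤ D p v ∧
      D p v ≤ ENNReal.ofReal ((1 + ζ') ^ p) * setBddDist G w S p v := by
  have hζ₀ : 0 ≤ 1 + ζ' := by linarith
  simp only [ENNReal.ofReal_pow hζ₀] at hupd ⊢
  have hc : 1 ≤ ENNReal.ofReal (1 + ζ') := ENNReal.one_le_ofReal.mpr (by linarith)
  exact fun p v => ⟨hlow p v,
    setBddDist_approx_upper hsymm (fun a b h => (hpos a b h).le) hc hS hupd p v⟩

/-- Correctness of the approximate streaming Bellman-Ford: if the estimates `D p`
are sound (never smaller than the true `p`-bounded distance), vanish on `S`, and the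
update rule loses at most a factor `(1+ζ')` relative to the best neighbor on a shortest
`(p+1)`-bounded path, then after `p` rounds
`d^{(p)}(v,S) ≤ D p v ≤ (1+ζ')^p · d^{(p)}(v,S)` for every vertex `v`. -/
theorem stmt12 {V : Type*} [Fintype V] [DecidableEq V] (G : SimpleGraph V)
    (w : V → V → ℝ) (hsymm : ∀ a b, w a b = w b a)
    (hpos : ∀ a b, G.Adj a b → 0 < w a b) (S : Set V)
    (ζ' : ℝ) (hζ : 0 < ζ')
    (D : ℕ → V → ℝ≥0∞)
    (hS : ∀ p, ∀ s ∈ S, D p s = 0)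
    (hlow : ∀ p v, setBddDist G w S p v ≤ D p v)
    (hupd : ∀ p v u, G.Adj u v →
      setBddDist G w S (p + 1) v = setBddDist G w S p u + ENNReal.ofReal (w u v) →
      D p u ≤ ENNReal.ofReal ((1 + ζ') ^ p) * setBddDist G w S p u →
      D (p + 1) v ≤ ENNReal.ofReal (1 + ζ') * (D p u + ENNReal.ofReal (w u v))) :
    ∀ p v, setBddDist G w S p v ≤ D p v ∧
      D p v ≤ ENNReal.ofReal ((1 + ζ') ^ p) * setBddDist G w S p v :=
  stmt12_general G w hsymm hpos S ζ' hζ D hS hlow hupd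
end

section
/- Let s, t ≥ 1 and let s₁ ≥ s₂ ≥ ... ≥ s_t ≥ 1 be positive integers with s = ∑_{j=1}^t s_j. If each quantity f(s_j) satisfies f(s_j) ≤ s_j · log₂ s_j, then ∑_{j=2}^t s_j + ∑_{j=1}^t s_j · log₂ s_j ≤ s · log₂ s. In particular, when t ≥ 2: s₁ log₂ s₁ + ∑_{j=2}^t s_j log₂(2 s_j) ≤ s₁ log₂(s₁ + s₂) + ∑_{j=2}^t s_j log₂(s₁ + s_j) ≤ s log₂ s. -/
open Finset

/-! Split `s log₂ s` as `∑ⱼ sⱼ log₂ s`. The largest part keeps its own term, since `s₁ ≤ s`;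
every other part `sⱼ` pays for its extra `sⱼ = sⱼ log₂ 2` because `2 sⱼ ≤ s₁ + sⱼ ≤ s`. -/

namespace Real

theorem mul_logb_two_mul (x : ℝ) : x * logb 2 (2 * x) = x + x * logb 2 x := by
  rcases eq_or_ne x 0 with rfl | hx
  · simp
  · rw [logb_mul two_ne_zero hx, logb_self_eq_one one_lt_two]
    ring

theorem mul_logb_le_mul_logb_of_le {b c x y : ℝ} (hb : 1 < b) (hc : 0 ≤ c) (hcx : c ≤ x)
    (hxy : x ≤ y) : c * logb b x ≤ c * logb b y := by
  rcases hc.eq_or_lt with rfl | hc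
  · simp
  · exact mul_le_mul_of_nonneg_left (logb_le_logb_of_le hb (hc.trans_le hcx) hxy) hc.le

end Real

open Real

section LargestPart

variable {ι : Type*} [Fintype ι] [DecidableEq ι] {w : ι → ℝ} {i₀ : ι}

theorem add_le_sum_of_ne (hw : ∀ i, 0 ≤ w i) {i : ι} (hi : i ≠ i₀) : w i₀ + w i ≤ ∑ j, w j := by
  rw [← add_sum_erase _ w (mem_univ i₀)]
  gcongr
  exact single_le_sum (fun j _ => hw j) (mem_erase.2 ⟨hi, mem_univ i⟩)

theorem sum_erase_add_sum_mul_logb_le (hw : ∀ i, 0 ≤ w i) (hmax : ∀ i, w i ≤ w i₀) :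
    ∑ j ∈ univ.erase i₀, w j + ∑ j, w j * logb 2 (w j)
      ≤ (∑ j, w j) * logb 2 (∑ j, w j) := by
  set S := ∑ j, w j
  have hfirst : w i₀ * logb 2 (w i₀) ≤ w i₀ * logb 2 S :=
    mul_logb_le_mul_logb_of_le one_lt_two (hw i₀) le_rfl
      (single_le_sum (fun j _ => hw j) (mem_univ i₀))
  have hrest : ∀ j ∈ univ.erase i₀, w j * logb 2 (2 * w j) ≤ w j * logb 2 S := fun j hj =>
    mul_logb_le_mul_logb_of_le one_lt_two (hw j) (by linarith [hw j])
      (by linarith [hmax j, add_le_sum_of_ne hw (ne_of_mem_erase hj)])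
  calc ∑ j ∈ univ.erase i₀, w j + ∑ j, w j * logb 2 (w j)
      = w i₀ * logb 2 (w i₀) + ∑ j ∈ univ.erase i₀, w j * logb 2 (2 * w j) := by
        simp only [mul_logb_two_mul, sum_add_distrib, ← add_sum_erase _ _ (mem_univ i₀)]
        ring
    _ ≤ w i₀ * logb 2 S + ∑ j ∈ univ.erase i₀, w j * logb 2 S :=
        add_le_add hfirst (sum_le_sum hrest)
    _ = S * logb 2 S := by rw [sum_mul, add_sum_erase _ (fun j => w j * logb 2 S) (mem_univ i₀)]

theorem mul_logb_add_sum_erase_mul_logb_two_mul_le (hw : ∀ i, 0 ≤ w i)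
    (hmax : ∀ i, w i ≤ w i₀) (i₁ : ι) :
    w i₀ * logb 2 (w i₀) + ∑ j ∈ univ.erase i₀, w j * logb 2 (2 * w j)
      ≤ w i₀ * logb 2 (w i₀ + w i₁) + ∑ j ∈ univ.erase i₀, w j * logb 2 (w i₀ + w j) := by
  refine add_le_add ?_ (sum_le_sum fun j _ => ?_)
  · exact mul_logb_le_mul_logb_of_le one_lt_two (hw i₀) le_rfl (by linarith [hw i₁])
  · exact mul_logb_le_mul_logb_of_le one_lt_two (hw j) (by linarith [hw j])
      (by linarith [hmax j])

theorem mul_logb_add_sum_erase_mul_logb_add_le (hw : ∀ i, 0 ≤ w i) {i₁ : ι} (hi₁ : i₁ ≠ i₀) :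
    w i₀ * logb 2 (w i₀ + w i₁) + ∑ j ∈ univ.erase i₀, w j * logb 2 (w i₀ + w j)
      ≤ (∑ j, w j) * logb 2 (∑ j, w j) := by
  set S := ∑ j, w j
  calc w i₀ * logb 2 (w i₀ + w i₁) + ∑ j ∈ univ.erase i₀, w j * logb 2 (w i₀ + w j)
      ≤ w i₀ * logb 2 S + ∑ j ∈ univ.erase i₀, w j * logb 2 S := by
        refine add_le_add ?_ (sum_le_sum fun j hj => ?_)
        · exact mul_logb_le_mul_logb_of_le one_lt_two (hw i₀) (by linarith [hw i₁])
            (add_le_sum_of_ne hw hi₁)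
        · exact mul_logb_le_mul_logb_of_le one_lt_two (hw j) (by linarith [hw i₀])
            (add_le_sum_of_ne hw (ne_of_mem_erase hj))
    _ = S * logb 2 S := by rw [sum_mul, add_sum_erase _ (fun j => w j * logb 2 S) (mem_univ i₀)]

end LargestPart

theorem stmt14_general (t : ℕ) (s : Fin (t + 1) → ℕ)
    (hsorted : ∀ i j : Fin (t + 1), i ≤ j → s j ≤ s i) :
    ((∑ j ∈ Finset.univ.erase 0, (s j : ℝ)) + ∑ j, (s j : ℝ) * Real.logb 2 (s j)
      ≤ (∑ j, (s j : ℝ)) * Real.logb 2 (∑ j, (s j : ℝ))) ∧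
    (1 ≤ t →
      ((s 0 : ℝ) * Real.logb 2 (s 0)
          + ∑ j ∈ Finset.univ.erase 0, (s j : ℝ) * Real.logb 2 (2 * (s j : ℝ))
        ≤ (s 0 : ℝ) * Real.logb 2 ((s 0 : ℝ) + (s 1 : ℝ))
          + ∑ j ∈ Finset.univ.erase 0, (s j : ℝ) * Real.logb 2 ((s 0 : ℝ) + (s j : ℝ))) ∧
      ((s 0 : ℝ) * Real.logb 2 ((s 0 : ℝ) + (s 1 : ℝ))
          + ∑ j ∈ Finset.univ.erase 0, (s j : ℝ) * Real.logb 2 ((s 0 : ℝ) + (s j : ℝ))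
        ≤ (∑ j, (s j : ℝ)) * Real.logb 2 (∑ j, (s j : ℝ)))) := by
  have hw : ∀ j, (0 : ℝ) ≤ s j := fun j => Nat.cast_nonneg _
  have hmax : ∀ j, (s j : ℝ) ≤ s 0 := fun j => by exact_mod_cast hsorted 0 j (Fin.zero_le j)
  refine ⟨sum_erase_add_sum_mul_logb_le hw hmax, fun ht => ?_⟩
  have : NeZero t := ⟨by omega⟩
  have hone : (1 : Fin (t + 1)) ≠ 0 := Fin.one_pos'.ne'
  exact ⟨mul_logb_add_sum_erase_mul_logb_two_mul_le hw hmax 1,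
    mul_logb_add_sum_erase_mul_logb_add_le hw hone⟩

/-- The key arithmetic inequality behind the `n log n` bound on star edges: for
positive integers `s₀ ≥ s₁ ≥ … ≥ s_t` with sum `s`,
`∑_{j≥1} s_j + ∑_j s_j log₂ s_j ≤ s log₂ s`, via the chain
`s₀ log₂ s₀ + ∑_{j≥1} s_j log₂(2 s_j) ≤ s₀ log₂(s₀+s₁) + ∑_{j≥1} s_j log₂(s₀+s_j) ≤ s log₂ s`. -/
theorem stmt14 (t : ℕ) (s : Fin (t + 1) → ℕ) (hpos : ∀ j, 1 ≤ s j)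
    (hsorted : ∀ i j : Fin (t + 1), i ≤ j → s j ≤ s i) :
    ((∑ j ∈ Finset.univ.erase 0, (s j : ℝ)) + ∑ j, (s j : ℝ) * Real.logb 2 (s j)
      ≤ (∑ j, (s j : ℝ)) * Real.logb 2 (∑ j, (s j : ℝ))) ∧
    (1 ≤ t →
      ((s 0 : ℝ) * Real.logb 2 (s 0)
          + ∑ j ∈ Finset.univ.erase 0, (s j : ℝ) * Real.logb 2 (2 * (s j : ℝ))
        ≤ (s 0 : ℝ) * Real.logb 2 ((s 0 : ℝ) + (s 1 : ℝ))
          + ∑ j ∈ Finset.univ.erase 0, (s j : ℝ) * Real.logb 2 ((s 0 : ℝ) + (s j : ℝ))) ∧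
      ((s 0 : ℝ) * Real.logb 2 ((s 0 : ℝ) + (s 1 : ℝ))
          + ∑ j ∈ Finset.univ.erase 0, (s j : ℝ) * Real.logb 2 ((s 0 : ℝ) + (s j : ℝ))
        ≤ (∑ j, (s j : ℝ)) * Real.logb 2 (∑ j, (s j : ℝ)))) :=
  stmt14_general t s hsorted
end
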